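/- arXiv:0905.0615 — 2 statements merged into one kernel-verified Lean document; each statement's English description precedes it below -/
import Mathlib

section
/- For all x,y ∈ X with x ≠ y one has φ₁(x,y) = φ(x,y), and φ₁(x,x) ≥ φ(x,x) = 0 for all x. Moreover, for all x,y ∈ X, φ₁(x,y) = T⁻φ_x(y) + α[0]. -/
open Metric Set Filter Topology

/-- `X` is a `B`-length space at scale `K`. -/
def IsBLengthSpaceAtScale (X : Type*) [MetricSpace X] (B K : ℝ) : Prop :=
  ∀ x y : X, ∃ (n : ℕ) (p : ℕ → X), p 0 = x ∧ p n = y ∧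
    (∀ i < n, dist (p i) (p (i + 1)) ≤ K) ∧
    ∑ i ∈ Finset.range n, dist (p i) (p (i + 1)) ≤ B * dist x y

/-- Uniform superlinearity of the cost `c`. -/
def UniformlySuperlinear {X : Type*} [MetricSpace X] (c : X → X → ℝ) : Prop :=
  ∀ k : ℝ, 0 ≤ k → ∃ C : ℝ, ∀ x y : X, k * dist x y - C ≤ c x y

/-- Uniform boundedness of the cost `c`. -/
def UniformlyBounded {X : Type*} [MetricSpace X] (c : X → X → ℝ) : Prop :=
  ∀ R : ℝ, ∃ A : ℝ, ∀ x y : X, dist x y ≤ R → c x y ≤ A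

/-- `u` is `α`-dominated: `u y - u x ≤ c x y + α` for all `x y`. -/
def Dominated {X : Type*} (c : X → X → ℝ) (α : ℝ) (u : X → ℝ) : Prop :=
  ∀ x y : X, u y - u x ≤ c x y + α

/-- Negative Lax-Oleinik semigroup. -/
noncomputable def Tm {X : Type*} (c : X → X → ℝ) (u : X → ℝ) (x : X) : ℝ :=
  ⨅ y, (u y + c y x)

/-- Positive Lax-Oleinik semigroup. -/
noncomputable def Tp {X : Type*} (c : X → X → ℝ) (u : X → ℝ) (x : X) : ℝ :=
  ⨆ y, (u y - c x y)

/-- The critical constant `α[0]`: the smallest `α` for which `α`-dominated functions exist. -/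
noncomputable def critValue {X : Type*} (c : X → X → ℝ) : ℝ :=
  sInf {α : ℝ | ∃ u : X → ℝ, Dominated c α u}

/-- The Mañé potential `φ(x,y) = sup_u (u y - u x)`, sup over critical sub-solutions. -/
noncomputable def mane {X : Type*} (c : X → X → ℝ) (x y : X) : ℝ :=
  sSup {r : ℝ | ∃ u : X → ℝ, Dominated c (critValue c) u ∧ r = u y - u x}

/-- A bi-infinite sequence is `(u,c,α)`-calibrated if all its finite subchains of
consecutive terms are calibrated. -/
def IsCalibrated {X : Type*} (c : X → X → ℝ) (α : ℝ) (u : X → ℝ) (x : ℤ → X) : Prop :=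
  ∀ (m : ℤ) (k : ℕ), u (x (m + k)) =
    u (x m) + (∑ i ∈ Finset.range k, c (x (m + i)) (x (m + i + 1))) + k * α

/-- The projected Aubry set of a critical sub-solution `u`. -/
def projAubry {X : Type*} (c : X → X → ℝ) (u : X → ℝ) : Set X :=
  {p : X | ∃ x : ℤ → X, IsCalibrated c (critValue c) u x ∧ x 0 = p}

/-- The set `Â_u` of pairs of consecutive terms of calibrated bi-infinite sequences. -/
def aubryPairs {X : Type*} (c : X → X → ℝ) (u : X → ℝ) : Set (X × X) :=
  {q : X × X | ∃ (x : ℤ → X) (n : ℤ),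
    IsCalibrated c (critValue c) u x ∧ x n = q.1 ∧ x (n + 1) = q.2}

/-- The projected Aubry set `A = ∩_u A_u`, intersection over all critical sub-solutions. -/
def projAubrySet {X : Type*} (c : X → X → ℝ) : Set X :=
  {p : X | ∀ u : X → ℝ, Dominated c (critValue c) u → p ∈ projAubry c u}

/-- The Aubry pair set `Â = ∩_u Â_u`, intersection over all critical sub-solutions. -/
def aubryPairsSet {X : Type*} (c : X → X → ℝ) : Set (X × X) :=
  {q : X × X | ∀ u : X → ℝ, Dominated c (critValue c) u → q ∈ aubryPairs c u}

/-- `c_n(x,y)`: infimum of total cost over chains of length `n` from `x` to `y`. -/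
noncomputable def cChain {X : Type*} (c : X → X → ℝ) (n : ℕ) (x y : X) : ℝ :=
  sInf {r : ℝ | ∃ p : ℕ → X, p 0 = x ∧ p n = y ∧
    r = ∑ i ∈ Finset.range n, c (p i) (p (i + 1))}

/-- `φ_n(x,y) = inf_{k ≥ n} (c_k(x,y) + k·α)`. -/
noncomputable def phiN {X : Type*} (c : X → X → ℝ) (α : ℝ) (n : ℕ) (x y : X) : ℝ :=
  sInf {r : ℝ | ∃ k : ℕ, n ≤ k ∧ r = cChain c k x y + k * α}

/-- The Peierls barrier, with values in the extended reals. -/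
noncomputable def peierls {X : Type*} (c : X → X → ℝ) (α : ℝ) (x y : X) : EReal :=
  Filter.liminf (fun n : ℕ => ((cChain c n x y + n * α : ℝ) : EReal)) Filter.atTop

/-- Negative Lax-Oleinik semigroup on extended-real-valued functions. -/
noncomputable def eTm {X : Type*} (c : X → X → ℝ) (u : X → EReal) (x : X) : EReal :=
  ⨅ y, (u y + (c y x : EReal))

/-- Positive Lax-Oleinik semigroup on extended-real-valued functions. -/
noncomputable def eTp {X : Type*} (c : X → X → ℝ) (u : X → EReal) (x : X) : EReal :=
  ⨆ y, (u y - (c x y : EReal))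

/-! Since `c` is bounded below, some `α` admits `α`-dominated functions, and `α[0]` is the least
`α` for which every closed chain has nonnegative `α`-cost. For every such `α`, the function
`φ₁(x, ·)` reset to `0` at `x` is `α`-dominated, because appending one step to a chain of length
`k` gives a chain of length `k + 1`. Every critical sub-solution `u` satisfies
`u y - u x ≤ φ₁(x, y)`, so at `α = α[0]` this reset function is exactly `φ_x`. The Lax–Oleinik
identity follows from the same decomposition of a chain into its last step and the rest. -/

open Function

section Chains

variable {X : Type*} {c : X → X → ℝ} {α : ℝ}

def chainCost (c : X → X → ℝ) (p : ℕ → X) (n : ℕ) : ℝ :=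
  ∑ i ∈ Finset.range n, c (p i) (p (i + 1))

lemma chainCost_succ (p : ℕ → X) (n : ℕ) :
    chainCost c p (n + 1) = chainCost c p n + c (p n) (p (n + 1)) :=
  Finset.sum_range_succ _ _

lemma chainCost_update_succ (p : ℕ → X) (n : ℕ) (z : X) :
    chainCost c (update p (n + 1) z) (n + 1) = chainCost c p n + c (p n) z := by
  rw [chainCost_succ, update_self, update_of_ne (by omega : n ≠ n + 1)]
  congr 1
  refine Finset.sum_congr rfl fun i hi => ?_
  have hi : i < n := Finset.mem_range.1 hi
  rw [update_of_ne (by omega), update_of_ne (by omega)]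

def ClosedChainsNonneg (c : X → X → ℝ) (α : ℝ) : Prop :=
  ∀ (n : ℕ) (p : ℕ → X), p n = p 0 → 0 ≤ chainCost c p n + n * α

lemma Dominated.sub_le_chainCost {u : X → ℝ} (hu : Dominated c α u) (p : ℕ → X) (n : ℕ) :
    u (p n) - u (p 0) ≤ chainCost c p n + n * α := by
  induction n with
  | zero => simp [chainCost]
  | succ n ih =>
    rw [chainCost_succ]
    push_cast
    linarith [hu (p n) (p (n + 1))]

lemma Dominated.closedChainsNonneg {u : X → ℝ} (hu : Dominated c α u) :
    ClosedChainsNonneg c α := fun n p hp => by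
  simpa [hp] using hu.sub_le_chainCost p n

namespace ClosedChainsNonneg

lemma neg_le_chainCost (h : ClosedChainsNonneg c α) (p : ℕ → X) (n : ℕ) :
    -(c (p n) (p 0) + α) ≤ chainCost c p n + n * α := by
  have hclosed := h (n + 1) (update p (n + 1) (p 0)) (by simp)
  rw [chainCost_update_succ] at hclosed
  push_cast at hclosed
  linarith

lemma cChain_le (h : ClosedChainsNonneg c α) (p : ℕ → X) (k : ℕ) :
    cChain c k (p 0) (p k) ≤ chainCost c p k := by
  refine csInf_le ⟨-(c (p k) (p 0) + α) - k * α, ?_⟩ ⟨p, rfl, rfl, rfl⟩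
  rintro _ ⟨q, hq0, hqk, rfl⟩
  have := h.neg_le_chainCost q k
  rw [hq0, hqk, chainCost] at this
  linarith

end ClosedChainsNonneg

lemma le_cChain {k : ℕ} (hk : k ≠ 0) {x y : X} {a : ℝ}
    (h : ∀ p : ℕ → X, p 0 = x → p k = y → a ≤ chainCost c p k) : a ≤ cChain c k x y :=
  le_csInf ⟨_, update (fun _ => y) 0 x, by simp, by simp [hk], rfl⟩
    (by rintro _ ⟨p, hp0, hpk, rfl⟩; exact h p hp0 hpk)

lemma le_phiN {n : ℕ} {x y : X} {a : ℝ} (h : ∀ k, n ≤ k → a ≤ cChain c k x y + k * α) :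
    a ≤ phiN c α n x y :=
  le_csInf ⟨_, n, le_rfl, rfl⟩ (by rintro _ ⟨k, hk, rfl⟩; exact h k hk)

lemma Dominated.sub_le_phiN {u : X → ℝ} (hu : Dominated c α u) {n : ℕ} (hn : n ≠ 0)
    (x y : X) : u y - u x ≤ phiN c α n x y := by
  refine le_phiN fun k hk => ?_
  have : u y - u x - k * α ≤ cChain c k x y := le_cChain (by omega) fun p hp0 hpk => by
    have := hu.sub_le_chainCost p k
    rw [hp0, hpk] at this
    linarith
  linarith

namespace ClosedChainsNonneg

variable (h : ClosedChainsNonneg c α)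
include h

lemma neg_le_cChain {k : ℕ} (hk : k ≠ 0) (x y : X) :
    -(c y x + α) ≤ cChain c k x y + k * α := by
  have : -(c y x + α) - k * α ≤ cChain c k x y := le_cChain hk fun p hp0 hpk => by
    have := h.neg_le_chainCost p k
    rw [hp0, hpk] at this
    linarith
  linarith

lemma phiN_le {n k : ℕ} (hn : n ≠ 0) (hnk : n ≤ k) (x y : X) :
    phiN c α n x y ≤ cChain c k x y + k * α := by
  refine csInf_le ⟨-(c y x + α), ?_⟩ ⟨k, hnk, rfl⟩
  rintro _ ⟨j, hj, rfl⟩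
  exact h.neg_le_cChain (by omega) x y

lemma phiN_self_nonneg {n : ℕ} (hn : n ≠ 0) (x : X) : 0 ≤ phiN c α n x x := by
  refine le_phiN fun k hk => ?_
  have : -(k * α) ≤ cChain c k x x := le_cChain (by omega) fun p hp0 hpk => by
    linarith [h k p (hpk.trans hp0.symm)]
  linarith

lemma phiN_one_le_add (x y : X) : phiN c α 1 x y ≤ c x y + α := by
  have h1 := h.phiN_le one_ne_zero le_rfl x y
  have h2 : cChain c 1 x y ≤ c x y := by
    simpa [chainCost] using h.cChain_le (update (fun _ => x) 1 y) 1
  push_cast at h1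
  linarith

lemma phiN_one_le_phiN_one_add (x y z : X) :
    phiN c α 1 x z ≤ phiN c α 1 x y + c y z + α := by
  have : phiN c α 1 x z - c y z - α ≤ phiN c α 1 x y := le_phiN fun k hk => by
    have : phiN c α 1 x z - c y z - α - k * α ≤ cChain c k x y :=
      le_cChain (by omega) fun p hp0 hpk => by
        have h1 := h.phiN_le one_ne_zero (by omega : 1 ≤ k + 1) x z
        have h2 := h.cChain_le (update p (k + 1) z) (k + 1)
        rw [chainCost_update_succ, update_self, update_of_ne (by omega : 0 ≠ k + 1), hp0,
          hpk] at h2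
        push_cast at h1
        linarith
    linarith
  linarith

lemma phiN_one_le_update_add [DecidableEq X] (x y z : X) :
    phiN c α 1 x z ≤ update (phiN c α 1 x) x 0 y + c y z + α := by
  rcases eq_or_ne y x with rfl | hy
  · rw [update_self, zero_add]
    exact h.phiN_one_le_add y z
  · rw [update_of_ne hy]
    exact h.phiN_one_le_phiN_one_add x y z

lemma update_phiN_one_le [DecidableEq X] (x z : X) :
    update (phiN c α 1 x) x 0 z ≤ phiN c α 1 x z := by
  rcases eq_or_ne z x with rfl | hz
  · rw [update_self]
    exact h.phiN_self_nonneg one_ne_zero z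
  · rw [update_of_ne hz]

lemma dominated_update_phiN_one [DecidableEq X] (x : X) :
    Dominated c α (update (phiN c α 1 x) x 0) :=
  fun y z => by linarith [h.update_phiN_one_le x z, h.phiN_one_le_update_add x y z]

lemma update_phiN_one_le_chainCost [DecidableEq X] (p : ℕ → X) (m : ℕ) :
    update (phiN c α 1 (p 0)) (p 0) 0 (p m) ≤ chainCost c p m + m * α := by
  rcases eq_or_ne (p m) (p 0) with hm | hm
  · rw [hm, update_self]
    exact h m p hm
  · have hm0 : m ≠ 0 := by rintro rfl; exact hm rfl
    rw [update_of_ne hm]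
    linarith [h.phiN_le one_ne_zero (Nat.one_le_iff_ne_zero.2 hm0) (p 0) (p m), h.cChain_le p m]

lemma Tm_update_phiN_one_add [DecidableEq X] (x y : X) :
    Tm c (update (phiN c α 1 x) x 0) y + α = phiN c α 1 x y := by
  set w := update (phiN c α 1 x) x 0
  have hlow : ∀ z, phiN c α 1 x y - α ≤ w z + c z y := fun z => by
    linarith [h.phiN_one_le_update_add x z y]
  apply le_antisymm
  · refine le_phiN fun k hk => ?_
    obtain ⟨m, rfl⟩ : ∃ m, k = m + 1 := ⟨k - 1, by omega⟩
    have : Tm c w y + α - (m + 1 : ℕ) * α ≤ cChain c (m + 1) x y :=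
      le_cChain (Nat.succ_ne_zero m) fun p hp0 hpk => by
        have h1 : Tm c w y ≤ w (p m) + c (p m) y :=
          ciInf_le ⟨_, by rintro _ ⟨z, rfl⟩; exact hlow z⟩ (p m)
        have h2 := h.update_phiN_one_le_chainCost p m
        rw [hp0] at h2
        rw [chainCost_succ, hpk]
        push_cast
        linarith
    linarith
  · have : Nonempty X := ⟨x⟩
    have : phiN c α 1 x y - α ≤ Tm c w y := le_ciInf hlow
    linarith

end ClosedChainsNonneg

end Chains

section Mane

variable {X : Type*} {c : X → X → ℝ}

-- `α[0]` is an infimum of `α`s satisfying the closed constraints `0 ≤ chainCost c p n + n * α`.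
lemma closedChainsNonneg_critValue (hc : ∃ α, ∃ u : X → ℝ, Dominated c α u) :
    ClosedChainsNonneg c (critValue c) := by
  intro n p hp
  rcases Nat.eq_zero_or_pos n with rfl | hn
  · simp [chainCost]
  have hn' : (0 : ℝ) < n := by exact_mod_cast hn
  have : -chainCost c p n / n ≤ critValue c := le_csInf hc fun α ⟨u, hu⟩ => by
    rw [div_le_iff₀ hn']
    linarith [hu.closedChainsNonneg n p hp]
  rw [div_le_iff₀ hn'] at this
  linarith

lemma Dominated.sub_le_mane {u : X → ℝ} (hu : Dominated c (critValue c) u) (x y : X) :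
    u y - u x ≤ mane c x y :=
  le_csSup ⟨c x y + critValue c, by rintro _ ⟨v, hv, rfl⟩; exact hv x y⟩ ⟨u, hu, rfl⟩

lemma ClosedChainsNonneg.mane_eq_update [DecidableEq X] (h : ClosedChainsNonneg c (critValue c))
    (x : X) :
    mane c x = update (phiN c (critValue c) 1 x) x 0 := by
  funext z
  apply le_antisymm
  · refine csSup_le ⟨_, _, h.dominated_update_phiN_one x, rfl⟩ ?_
    rintro _ ⟨u, hu, rfl⟩
    rcases eq_or_ne z x with rfl | hz
    · simp
    · rw [update_of_ne hz]
      exact hu.sub_le_phiN one_ne_zero x z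
  · simpa using (h.dominated_update_phiN_one x).sub_le_mane x z

end Mane

theorem phiOne_eq_mane_off_diagonal_general {X : Type*} [MetricSpace X]
    {c : X → X → ℝ}
    (hsl : UniformlySuperlinear c) :
    (∀ x y : X, x ≠ y → phiN c (critValue c) 1 x y = mane c x y) ∧
    (∀ x : X, mane c x x = 0 ∧ 0 ≤ phiN c (critValue c) 1 x x) ∧
    (∀ x y : X, phiN c (critValue c) 1 x y = Tm c (mane c x) y + critValue c) := by
  classical
  obtain ⟨C, hC⟩ := hsl 0 le_rfl
  have hcrit : ClosedChainsNonneg c (critValue c) := closedChainsNonneg_critValue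
    ⟨C, fun _ => 0, fun x y => by linarith [hC x y, zero_mul (dist x y)]⟩
  refine ⟨fun x y hxy => ?_, fun x => ⟨?_, hcrit.phiN_self_nonneg one_ne_zero x⟩, fun x y => ?_⟩
  · rw [hcrit.mane_eq_update, update_of_ne hxy.symm]
  · rw [hcrit.mane_eq_update, update_self]
  · rw [hcrit.mane_eq_update, hcrit.Tm_update_phiN_one_add]

theorem phiOne_eq_mane_off_diagonal {X : Type*} [MetricSpace X] [Nonempty X] [ProperSpace X]
    {B K : ℝ} (hB : 1 ≤ B) (hK : 0 < K) (hlen : IsBLengthSpaceAtScale X B K)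
    {c : X → X → ℝ} (hcont : Continuous fun q : X × X => c q.1 q.2)
    (hsl : UniformlySuperlinear c) (hub : UniformlyBounded c) :
    (∀ x y : X, x ≠ y → phiN c (critValue c) 1 x y = mane c x y) ∧
    (∀ x : X, mane c x x = 0 ∧ 0 ≤ phiN c (critValue c) 1 x x) ∧
    (∀ x y : X, phiN c (critValue c) 1 x y = Tm c (mane c x) y + critValue c) :=
  phiOne_eq_mane_off_diagonal_general hsl
end

section
/- Assume the Peierls barrier h is finite. Then for every x ∈ X the function h_x = h(x,·) is a negative weak KAM solution (h_x = T⁻h_x + α[0]) and the function h^x = −h(·,x) is a positive weak KAM solution (h^x = T⁺h^x − α[0]). -/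
open Metric Set Filter Topology

/-!
Along a near-optimal chain from `x` to `z` of large length, the last two points `q, y` stay in a
bounded set: superlinearity of `c` beats the at most linear decay of `c_n(x, ·) + n α[0]`, which
comes from cycles having nonnegative critical cost and from short chains in a length space. A
limit `(q', y')` of such pairs gives `h(x, y') + c(y', z) + α[0] ≤ h(x, z) + ε`, while
`c_{n+1}(x, z) ≤ c_n(x, y) + c(y, z)` gives the reverse inequality; hence `h_x = T⁻h_x + α[0]`.
The positive statement is the negative one for the reversed cost `(x, y) ↦ c(y, x)`.
-/

open Finset Function

section Chains

variable {X : Type*} {c : X → X → ℝ} {C : ℝ}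

lemma cChain_le_sum (hC : ∀ x y, C ≤ c x y) (n : ℕ) (p : ℕ → X) :
    cChain c n (p 0) (p n) ≤ ∑ i ∈ range n, c (p i) (p (i + 1)) := by
  refine csInf_le ⟨n * C, ?_⟩ ⟨p, rfl, rfl, rfl⟩
  rintro r ⟨q, -, -, rfl⟩
  simpa using card_nsmul_le_sum (range n) _ C fun i _ => hC (q i) (q (i + 1))

lemma nonempty_chainSums {n : ℕ} (hn : 1 ≤ n) (x y : X) :
    {r : ℝ | ∃ p : ℕ → X, p 0 = x ∧ p n = y ∧
      r = ∑ i ∈ range n, c (p i) (p (i + 1))}.Nonempty :=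
  ⟨_, fun i => if i = 0 then x else y, by simp, by simp [Nat.one_le_iff_ne_zero.mp hn], rfl⟩

lemma le_cChain_s18 {n : ℕ} (hn : 1 ≤ n) {x y : X} {b : ℝ}
    (h : ∀ p : ℕ → X, p 0 = x → p n = y → b ≤ ∑ i ∈ range n, c (p i) (p (i + 1))) :
    b ≤ cChain c n x y :=
  le_csInf (nonempty_chainSums hn x y) fun _ ⟨p, hp0, hpn, hr⟩ => hr ▸ h p hp0 hpn

lemma exists_sum_lt_cChain_add {n : ℕ} (hn : 1 ≤ n) (x y : X) {ε : ℝ} (hε : 0 < ε) :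
    ∃ p : ℕ → X, p 0 = x ∧ p n = y ∧
      ∑ i ∈ range n, c (p i) (p (i + 1)) < cChain c n x y + ε := by
  obtain ⟨_, ⟨p, hp0, hpn, rfl⟩, hlt⟩ :=
    Real.lt_sInf_add_pos (nonempty_chainSums hn x y) hε
  exact ⟨p, hp0, hpn, hlt⟩

lemma cChain_succ_le (hC : ∀ x y, C ≤ c x y) {n : ℕ} (hn : 1 ≤ n) (x y z : X) :
    cChain c (n + 1) x z ≤ cChain c n x y + c y z := by
  rw [← sub_le_iff_le_add]
  refine le_cChain_s18 hn fun p hp0 hpn => ?_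
  rw [sub_le_iff_le_add]
  have h := cChain_le_sum hC (n + 1) (update p (n + 1) z)
  rw [sum_range_succ, update_self, update_of_ne (by omega), update_of_ne (by omega), hp0,
    hpn] at h
  convert h using 2
  refine sum_congr rfl fun i hi => ?_
  rw [Finset.mem_range] at hi
  rw [update_of_ne (by omega), update_of_ne (by omega)]

lemma exists_cChain_add_lt (hC : ∀ x y, C ≤ c x y) {n : ℕ} (hn : 1 ≤ n) (x z : X) {ε : ℝ}
    (hε : 0 < ε) : ∃ y, cChain c n x y + c y z < cChain c (n + 1) x z + ε := by
  obtain ⟨p, hp0, hpn, hlt⟩ := exists_sum_lt_cChain_add (c := c) (n := n + 1) (by omega) x z hε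
  refine ⟨p n, ?_⟩
  have h := cChain_le_sum hC n p
  rw [sum_range_succ, hpn] at hlt
  rw [hp0] at h
  linarith

lemma cChain_add_le_sum (hC : ∀ x y, C ≤ c x y) {n : ℕ} (hn : 1 ≤ n) (x : X) (q : ℕ → X)
    (m : ℕ) :
    cChain c (n + m) x (q m) ≤ cChain c n x (q 0) + ∑ i ∈ range m, c (q i) (q (i + 1)) := by
  induction m with
  | zero => simp
  | succ m ih =>
    rw [sum_range_succ, ← add_assoc]
    linarith [cChain_succ_le hC (n := n + m) (by omega) x (q m) (q (m + 1))]

lemma Dominated.sub_le_sum {β : ℝ} {u : X → ℝ} (hu : Dominated c β u) (n : ℕ)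
    (p : ℕ → X) : u (p n) - u (p 0) ≤ ∑ i ∈ range n, c (p i) (p (i + 1)) + n * β := by
  induction n with
  | zero => simp
  | succ n ih =>
    rw [sum_range_succ, Nat.cast_succ]
    linarith [hu (p n) (p (n + 1))]

lemma Dominated.sub_le_cChain {β : ℝ} {u : X → ℝ} (hu : Dominated c β u) {n : ℕ}
    (hn : 1 ≤ n) (x y : X) : u y - u x ≤ cChain c n x y + n * β := by
  rw [← sub_le_iff_le_add]
  refine le_cChain_s18 hn fun p hp0 hpn => ?_
  have h := hu.sub_le_sum n p
  rw [hp0, hpn] at h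
  linarith

lemma cChain_self_add_nonneg (hC : ∀ x y, C ≤ c x y) {n : ℕ} (hn : 1 ≤ n) (x : X) :
    0 ≤ cChain c n x x + n * critValue c := by
  have hpos : (0 : ℝ) < n := by exact_mod_cast hn
  have h : -cChain c n x x / n ≤ critValue c := by
    refine le_csInf ⟨-C, fun _ => 0, fun x y => by simp; linarith [hC x y]⟩ ?_
    rintro β ⟨u, hu⟩
    rw [div_le_iff₀ hpos]
    linarith [hu.sub_le_cChain hn x x]
  rw [div_le_iff₀ hpos] at h
  linarith

end Chains

section LengthSpace

variable {X : Type*} [MetricSpace X] {K : ℝ}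

lemma dist_update_succ_le {L : ℝ} {q : ℕ → X} {m : ℕ} {y : X}
    (hq : ∀ i < m, dist (q i) (q (i + 1)) ≤ L) (hy : dist (q m) y ≤ L) :
    ∀ i < m + 1, dist (update q (m + 1) y i) (update q (m + 1) y (i + 1)) ≤ L := by
  intro i hi
  rw [update_of_ne (by omega)]
  rcases Nat.lt_succ_iff_lt_or_eq.mp hi with hi | rfl
  · rw [update_of_ne (by omega)]
    exact hq i hi
  · rwa [update_self]

/-- Greedy coarsening: merge consecutive steps of size `≤ K` into steps of size `≤ 2K`, each
merged step but the last one covering a path of length `> K`. -/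
lemma exists_coarse_chain (hK : 0 ≤ K) (p : ℕ → X) (n : ℕ)
    (hp : ∀ i < n, dist (p i) (p (i + 1)) ≤ K) :
    ∃ (m : ℕ) (q : ℕ → X), q 0 = p 0 ∧ q (m + 1) = p n ∧
      (∀ i < m + 1, dist (q i) (q (i + 1)) ≤ 2 * K) ∧
      m * K ≤ ∑ i ∈ range n, dist (p i) (p (i + 1)) := by
  -- `t` bounds the length of the part of `p` that follows the last merged point `q m`
  suffices h : ∃ (m : ℕ) (q : ℕ → X) (t : ℝ), q 0 = p 0 ∧
      (∀ i < m, dist (q i) (q (i + 1)) ≤ 2 * K) ∧ dist (q m) (p n) ≤ t ∧ t ≤ 2 * K ∧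
      m * K + t ≤ ∑ i ∈ range n, dist (p i) (p (i + 1)) by
    obtain ⟨m, q, t, hq0, hq, hqn, ht, hsum⟩ := h
    refine ⟨m, update q (m + 1) (p n), by rwa [update_of_ne (by omega)], update_self ..,
      dist_update_succ_le hq (hqn.trans ht), ?_⟩
    linarith [dist_nonneg.trans hqn]
  induction n with
  | zero => exact ⟨0, fun _ => p 0, 0, rfl, by simp, by simp, by linarith, by simp⟩
  | succ n ih =>
    obtain ⟨m, q, t, hq0, hq, hqn, ht, hsum⟩ := ih fun i hi => hp i (by omega)
    have hd := hp n (by omega)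
    have htri := dist_triangle (q m) (p n) (p (n + 1))
    rw [sum_range_succ]
    by_cases hle : t + dist (p n) (p (n + 1)) ≤ 2 * K
    · exact ⟨m, q, t + dist (p n) (p (n + 1)), hq0, hq, by linarith, hle, by linarith⟩
    · refine ⟨m + 1, update q (m + 1) (p n), dist (p n) (p (n + 1)),
        by rwa [update_of_ne (by omega)], dist_update_succ_le hq (hqn.trans ht),
        by rw [update_self], by linarith, ?_⟩
      push_cast
      linarith

lemma IsBLengthSpaceAtScale.exists_coarse_chain {B : ℝ} (hK : 0 ≤ K)
    (hlen : IsBLengthSpaceAtScale X B K) (x y : X) :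
    ∃ (m : ℕ) (q : ℕ → X), q 0 = x ∧ q (m + 1) = y ∧
      (∀ i < m + 1, dist (q i) (q (i + 1)) ≤ 2 * K) ∧ m * K ≤ B * dist x y := by
  obtain ⟨n, p, hp0, hpn, hp, hsum⟩ := hlen x y
  obtain ⟨m, q, hq0, hqm, hq, hmK⟩ := _root_.exists_coarse_chain hK p n hp
  exact ⟨m, q, hq0.trans hp0, hqm.trans hpn, hq, hmK.trans hsum⟩

lemma exists_chain_sum_le {B : ℝ} (hK : 0 < K) (hlen : IsBLengthSpaceAtScale X B K)
    {c : X → X → ℝ} {α a : ℝ} (ha0 : 0 ≤ a)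
    (ha : ∀ x y, dist x y ≤ 2 * K → c x y + α ≤ a) (x y : X) :
    ∃ (m : ℕ) (q : ℕ → X), q 0 = x ∧ q m = y ∧
      ∑ i ∈ range m, (c (q i) (q (i + 1)) + α) ≤ a * (B * dist x y / K + 1) := by
  obtain ⟨m, q, hq0, hqm, hq, hmK⟩ := hlen.exists_coarse_chain hK.le x y
  refine ⟨m + 1, q, hq0, hqm, ?_⟩
  have hm : (m : ℝ) ≤ B * dist x y / K := by rwa [le_div_iff₀ hK]
  calc ∑ i ∈ range (m + 1), (c (q i) (q (i + 1)) + α) ≤ ∑ _i ∈ range (m + 1), a :=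
        sum_le_sum fun i hi => ha _ _ (hq i (Finset.mem_range.mp hi))
    _ = (m + 1) * a := by simp
    _ ≤ a * (B * dist x y / K + 1) := by nlinarith

/-- `c_n(x, ·) + n α[0]` decays at most linearly: close the chain into a cycle by a short chain
back to `x`, and cycles have nonnegative critical cost. -/
lemma exists_linear_lower_bound_cChain {B : ℝ} (hB : 0 ≤ B) (hK : 0 < K)
    (hlen : IsBLengthSpaceAtScale X B K) {c : X → X → ℝ} {C : ℝ} (hC : ∀ x y, C ≤ c x y)
    (hub : UniformlyBounded c) (x : X) :
    ∃ κ a : ℝ, 0 ≤ κ ∧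
      ∀ n, 1 ≤ n → ∀ w, -(κ * dist x w + a) ≤ cChain c n x w + n * critValue c := by
  obtain ⟨A, hA⟩ := hub (2 * K)
  set a := max (A + critValue c) 0
  have ha0 : 0 ≤ a := le_max_right _ _
  refine ⟨a * B / K, a, by positivity, fun n hn w => ?_⟩
  obtain ⟨m, q, hq0, hqm, hsum⟩ := exists_chain_sum_le (c := c) (α := critValue c) hK hlen ha0
    (fun x y h => le_max_of_le_left (by linarith [hA x y h])) w x
  have hcycle := cChain_self_add_nonneg hC (n := n + m) (by omega) x
  have hsplit := cChain_add_le_sum hC hn x q m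
  rw [hq0, hqm] at hsplit
  rw [sum_add_distrib, sum_const, card_range, nsmul_eq_mul, dist_comm] at hsum
  have hlin : a * (B * dist x w / K + 1) = a * B / K * dist x w + a := by
    field_simp
  push_cast at hcycle
  linarith

end LengthSpace

section Liminf

variable {ι : Type*} {l : Filter ι} {f : ι → ℝ} {r : ℝ}

lemma eventually_sub_lt_of_liminf_coe_eq (h : liminf (fun i => (f i : EReal)) l = r) {δ : ℝ}
    (hδ : 0 < δ) : ∀ᶠ i in l, r - δ < f i := by
  have hlt : ((r - δ : ℝ) : EReal) < liminf (fun i => (f i : EReal)) l := by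
    rw [h]
    exact_mod_cast sub_lt_self r hδ
  exact (eventually_lt_of_lt_liminf hlt).mono fun i hi => by exact_mod_cast hi

lemma frequently_lt_add_of_liminf_coe_eq (h : liminf (fun i => (f i : EReal)) l = r) {δ : ℝ}
    (hδ : 0 < δ) : ∃ᶠ i in l, f i < r + δ := by
  have hlt : liminf (fun i => (f i : EReal)) l < ((r + δ : ℝ) : EReal) := by
    rw [h]
    exact_mod_cast lt_add_of_pos_right r hδ
  exact (frequently_lt_of_liminf_lt (h := hlt)).mono fun i hi => by exact_mod_cast hi

end Liminf

section Peierls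

variable {X : Type*} {c : X → X → ℝ} {C α : ℝ} {x : X}

lemma UniformlySuperlinear.exists_le [MetricSpace X] (hsl : UniformlySuperlinear c) :
    ∃ C, ∀ x y, C ≤ c x y := by
  obtain ⟨C, hC⟩ := hsl 0 le_rfl
  exact ⟨-C, fun x y => by simpa using hC x y⟩

lemma toReal_peierls_le_add (hC : ∀ x y, C ≤ c x y)
    (hfin : ∀ y, ∃ r : ℝ, peierls c α x y = r) (y z : X) :
    (peierls c α x z).toReal ≤ (peierls c α x y).toReal + c y z + α := by
  obtain ⟨r, hr⟩ := hfin y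
  obtain ⟨s, hs⟩ := hfin z
  rw [hr, hs, EReal.toReal_coe, EReal.toReal_coe]
  refine le_of_forall_pos_lt_add fun ε hε => ?_
  have hz := (tendsto_add_atTop_nat 1).eventually
    (eventually_sub_lt_of_liminf_coe_eq hs (half_pos hε))
  obtain ⟨n, hy, hz, hn⟩ :=
    ((frequently_lt_add_of_liminf_coe_eq hr (half_pos hε)).and_eventually
      (hz.and (eventually_ge_atTop 1))).exists
  have hsucc := cChain_succ_le hC hn x y z
  push_cast at hz
  linarith

lemma frequently_exists_cChain_add_lt (hC : ∀ x y, C ≤ c x y) {z : X} {s : ℝ}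
    (hs : peierls c α x z = s) {δ : ℝ} (hδ : 0 < δ) :
    ∃ᶠ n in atTop, 1 ≤ n ∧
      ∃ q y, cChain c n x q + c q y + c y z + (n + 2) * α < s + δ := by
  have hδ3 : 0 < δ / 3 := by positivity
  rw [frequently_atTop]
  intro N
  obtain ⟨m, hm, hlt⟩ := frequently_atTop.mp
    (frequently_lt_add_of_liminf_coe_eq hs hδ3) (N + 3)
  obtain ⟨n, rfl⟩ : ∃ n, m = n + 2 := ⟨m - 2, by omega⟩
  obtain ⟨y, hy⟩ := exists_cChain_add_lt hC (n := n + 1) (by omega) x z hδ3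
  obtain ⟨q, hq⟩ := exists_cChain_add_lt hC (n := n) (by omega) x y hδ3
  refine ⟨n, by omega, by omega, q, y, ?_⟩
  push_cast at hlt
  linarith

variable [MetricSpace X]

lemma exists_dist_le_of_cChain_add_le (hsl : UniformlySuperlinear c) {κ a : ℝ} (hκ : 0 ≤ κ)
    (hlow : ∀ n, 1 ≤ n → ∀ w, -(κ * dist x w + a) ≤ cChain c n x w + n * α)
    (z : X) (b : ℝ) :
    ∃ R, ∀ n, 1 ≤ n → ∀ q y, cChain c n x q + c q y + c y z + (n + 2) * α ≤ b →
      dist (q, y) (z, z) ≤ R := by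
  obtain ⟨C, hC⟩ := hsl (κ + 1) (by linarith)
  refine ⟨b + κ * dist x z + a + 2 * C - 2 * α, fun n hn q y h => ?_⟩
  have htri : dist x q ≤ dist x z + (dist q y + dist y z) := by
    linarith [dist_triangle x z q, dist_comm q z, dist_triangle q y z]
  have hκtri := mul_le_mul_of_nonneg_left htri hκ
  have hqz := dist_triangle q y z
  rw [Prod.dist_eq, max_le_iff]
  constructor <;> nlinarith [hlow n hn q, hC q y, hC y z, dist_nonneg (x := q) (y := y)]

lemma exists_peierls_add_le [ProperSpace X] (hcont : Continuous fun q : X × X => c q.1 q.2)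
    (hsl : UniformlySuperlinear c) {κ a : ℝ} (hκ : 0 ≤ κ)
    (hlow : ∀ n, 1 ≤ n → ∀ w, -(κ * dist x w + a) ≤ cChain c n x w + n * α)
    (hfin : ∀ y, ∃ r : ℝ, peierls c α x y = r) (z : X) {ε : ℝ} (hε : 0 < ε) :
    ∃ y, (peierls c α x y).toReal + c y z + α ≤ (peierls c α x z).toReal + ε := by
  obtain ⟨C, hC⟩ := hsl.exists_le
  obtain ⟨s, hs⟩ := hfin z
  obtain ⟨R, hR⟩ := exists_dist_le_of_cChain_add_le hsl hκ hlow z (s + ε / 2)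
  choose n hkn hn q y hlt using
    frequently_atTop.mp (frequently_exists_cChain_add_lt hC hs (half_pos hε))
  obtain ⟨p, -, φ, hφ, hlim⟩ :=
    tendsto_subseq_of_bounded (isBounded_closedBall (x := (z, z)) (r := R))
      fun k => mem_closedBall.mpr (hR _ (hn k) _ _ (hlt k).le)
  have hq : Tendsto (fun k => q (φ k)) atTop (𝓝 p.1) := (continuous_fst.tendsto p).comp hlim
  have hy : Tendsto (fun k => y (φ k)) atTop (𝓝 p.2) := (continuous_snd.tendsto p).comp hlim
  -- `p.2` is reached from `q (φ k)` by continuity of `c`; reaching it from `y (φ k)` would cost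
  -- `c (y (φ k)) p.2`, which need not be small
  have hgap : Tendsto (fun k => c (q (φ k)) p.2 + c p.2 z -
      (c (q (φ k)) (y (φ k)) + c (y (φ k)) z)) atTop (𝓝 0) := by
    have h1 := (hcont.tendsto (p.1, p.2)).comp (hq.prodMk_nhds tendsto_const_nhds)
    have h2 := (hcont.tendsto p).comp hlim
    have h3 := (hcont.tendsto (p.2, z)).comp (hy.prodMk_nhds tendsto_const_nhds)
    simpa using ((h1.add_const (c p.2 z)).sub (h2.add h3))
  obtain ⟨r, hr⟩ := hfin p.2
  have hnφ : Tendsto (fun k => n (φ k) + 1) atTop atTop :=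
    tendsto_atTop_mono (fun k => (hφ.id_le k).trans ((hkn (φ k)).trans (Nat.le_succ _)))
      tendsto_id
  have hε4 : 0 < ε / 4 := by positivity
  obtain ⟨k, hk1, hk2⟩ := ((hnφ.eventually (eventually_sub_lt_of_liminf_coe_eq hr hε4)).and
    (hgap.eventually (gt_mem_nhds hε4))).exists
  refine ⟨p.2, ?_⟩
  have hsucc := cChain_succ_le hC (hn (φ k)) x (q (φ k)) p.2
  rw [hr, hs, EReal.toReal_coe, EReal.toReal_coe]
  push_cast at hk1
  linarith [hlt (φ k)]

end Peierls

theorem toReal_peierls_eq_Tm_add {X : Type*} [MetricSpace X] [ProperSpace X] {B K : ℝ}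
    (hB : 0 ≤ B) (hK : 0 < K) (hlen : IsBLengthSpaceAtScale X B K) {c : X → X → ℝ}
    (hcont : Continuous fun q : X × X => c q.1 q.2) (hsl : UniformlySuperlinear c)
    (hub : UniformlyBounded c) {x : X} (hfin : ∀ y, ∃ r : ℝ, peierls c (critValue c) x y = r)
    (y : X) :
    (peierls c (critValue c) x y).toReal =
      Tm c (fun z => (peierls c (critValue c) x z).toReal) y + critValue c := by
  obtain ⟨C, hC⟩ := hsl.exists_le
  obtain ⟨κ, a, hκ, hlow⟩ := exists_linear_lower_bound_cChain hB hK hlen hC hub x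
  have : Nonempty X := ⟨y⟩
  have hTm : Tm c (fun z => (peierls c (critValue c) x z).toReal) y =
      (peierls c (critValue c) x y).toReal - critValue c := by
    refine ciInf_eq_of_forall_ge_of_forall_gt_exists_lt (fun w => ?_) fun b hb => ?_
    · linarith [toReal_peierls_le_add hC hfin w y]
    · obtain ⟨w, hw⟩ :=
        exists_peierls_add_le hcont hsl hκ hlow hfin y (half_pos (sub_pos.mpr hb))
      exact ⟨w, by dsimp only; linarith⟩
  linarith

section Swap

variable {X : Type*} {c : X → X → ℝ}

lemma Dominated.swap_neg {β : ℝ} {u : X → ℝ} (hu : Dominated c β u) :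
    Dominated (swap c) β (-u) := fun x y => by
  simp only [Pi.neg_apply, swap]
  linarith [hu y x]

lemma critValue_swap : critValue (swap c) = critValue c := by
  unfold critValue
  congr 1
  ext β
  exact ⟨fun ⟨u, hu⟩ => ⟨-u, hu.swap_neg⟩, fun ⟨u, hu⟩ => ⟨-u, hu.swap_neg⟩⟩

lemma sum_swap_eq_sum_reverse (c : X → X → ℝ) (p : ℕ → X) (n : ℕ) :
    ∑ i ∈ range n, swap c (p i) (p (i + 1)) =
      ∑ i ∈ range n, c (p (n - i)) (p (n - (i + 1))) := by
  rw [← sum_range_reflect]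
  refine sum_congr rfl fun i hi => ?_
  rw [Finset.mem_range] at hi
  simp only [swap]
  congr 2 <;> omega

lemma cChain_swap (n : ℕ) (x y : X) : cChain (swap c) n x y = cChain c n y x := by
  unfold cChain
  congr 1
  ext r
  constructor
  · rintro ⟨p, hp0, hpn, rfl⟩
    exact ⟨fun i => p (n - i), by simpa, by simpa, sum_swap_eq_sum_reverse c p n⟩
  · rintro ⟨p, hp0, hpn, rfl⟩
    exact ⟨fun i => p (n - i), by simpa, by simpa, sum_swap_eq_sum_reverse (swap c) p n⟩

lemma peierls_swap (α : ℝ) (x y : X) : peierls (swap c) α x y = peierls c α y x := by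
  simp only [peierls, cChain_swap]

lemma Tp_neg_eq_neg_Tm_swap (u : X → ℝ) (y : X) :
    Tp c (fun z => -u z) y = -Tm (swap c) u y := by
  rw [Tp, Tm, iInf, iSup, ← Real.sSup_neg, Set.neg_range]
  congr 2
  ext w
  simp only [swap]
  ring

variable [MetricSpace X]

lemma UniformlySuperlinear.swap (hsl : UniformlySuperlinear c) : UniformlySuperlinear (swap c) :=
  fun k hk => (hsl k hk).imp fun _ hC x y => by simpa [dist_comm] using hC y x

lemma UniformlyBounded.swap (hub : UniformlyBounded c) : UniformlyBounded (swap c) :=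
  fun R => (hub R).imp fun _ hA x y h => hA y x (by rwa [dist_comm])

end Swap

theorem peierls_weak_KAM_solutions_general {X : Type*} [MetricSpace X] [ProperSpace X]
    {B K : ℝ} (hB : 1 ≤ B) (hK : 0 < K) (hlen : IsBLengthSpaceAtScale X B K)
    {c : X → X → ℝ} (hcont : Continuous fun q : X × X => c q.1 q.2)
    (hsl : UniformlySuperlinear c) (hub : UniformlyBounded c)
    (hfin : ∀ x y : X, ∃ r : ℝ, peierls c (critValue c) x y = (r : EReal)) (x : X) :
    (∀ y : X, (peierls c (critValue c) x y).toReal =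
      Tm c (fun z => (peierls c (critValue c) x z).toReal) y + critValue c) ∧
    (∀ y : X, -(peierls c (critValue c) y x).toReal =
      Tp c (fun z => -(peierls c (critValue c) z x).toReal) y - critValue c) := by
  have hB0 : 0 ≤ B := by linarith
  refine ⟨toReal_peierls_eq_Tm_add hB0 hK hlen hcont hsl hub (hfin x), fun y => ?_⟩
  have hswap := toReal_peierls_eq_Tm_add (c := swap c) hB0 hK hlen
    (hcont.comp continuous_swap) hsl.swap hub.swap
    (fun z => by rw [critValue_swap, peierls_swap]; exact hfin z x) y
  simp only [critValue_swap, peierls_swap] at hswap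
  rw [Tp_neg_eq_neg_Tm_swap]
  linarith

theorem peierls_weak_KAM_solutions {X : Type*} [MetricSpace X] [Nonempty X] [ProperSpace X]
    {B K : ℝ} (hB : 1 ≤ B) (hK : 0 < K) (hlen : IsBLengthSpaceAtScale X B K)
    {c : X → X → ℝ} (hcont : Continuous fun q : X × X => c q.1 q.2)
    (hsl : UniformlySuperlinear c) (hub : UniformlyBounded c)
    (hfin : ∀ x y : X, ∃ r : ℝ, peierls c (critValue c) x y = (r : EReal)) (x : X) :
    (∀ y : X, (peierls c (critValue c) x y).toReal =
      Tm c (fun z => (peierls c (critValue c) x z).toReal) y + critValue c) ∧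
    (∀ y : X, -(peierls c (critValue c) y x).toReal =
      Tp c (fun z => -(peierls c (critValue c) z x).toReal) y - critValue c) :=
  peierls_weak_KAM_solutions_general hB hK hlen hcont hsl hub hfin x
end
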